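/- Graded unraveling preserves ALCQI concepts: if I* is the g-unraveling of interpretation I from root r with canonical map f sending each walk to its last element, then for every ALCQI concept C and every element s̄ of I*, s̄ ∈ C^{I*} if and only if f(s̄) ∈ C^I. -/

import Mathlib

/-- ALCQI concepts: `atLeast k R inv C` is `≥k R.C` when `inv = false`
and `≥k R⁻.C` when `inv = true`. -/
inductive ALCQI (Cn Rn : Type) : Type
  | top : ALCQI Cn Rn
  | bot : ALCQI Cn Rn
  | atom (A : Cn) : ALCQI Cn Rn
  | neg (C : ALCQI Cn Rn) : ALCQI Cn Rn
  | inter (C D : ALCQI Cn Rn) : ALCQI Cn Rn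
  | atLeast (k : ℕ) (R : Rn) (inv : Bool) (C : ALCQI Cn Rn) : ALCQI Cn Rn

/-- An interpretation with binary roles. -/
structure Interp (Cn Rn : Type) : Type 1 where
  Dom : Type
  cInt : Cn → Set Dom
  rInt : Rn → Set (Dom × Dom)

/-- Edges: a role name (`inl`) or an inverse role name (`inr`), interpreted accordingly. -/
def edgeRel {Cn Rn : Type} (I : Interp Cn Rn) : Rn ⊕ Rn → Set (I.Dom × I.Dom)
  | .inl R => I.rInt R
  | .inr R => { p | (p.2, p.1) ∈ I.rInt R }

/-- The inverse of an edge label. -/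
def invE {Rn : Type} : Rn ⊕ Rn → Rn ⊕ Rn
  | .inl R => .inr R
  | .inr R => .inl R

/-- Semantics of ALCQI; "at least `k` elements" is witnessed by an injection from `Fin k`. -/
def qsem {Cn Rn : Type} (I : Interp Cn Rn) : ALCQI Cn Rn → Set I.Dom
  | .top => Set.univ
  | .bot => ∅
  | .atom A => I.cInt A
  | .neg C => (qsem I C)ᶜ
  | .inter C D => qsem I C ∩ qsem I D
  | .atLeast k R b C =>
      { u | ∃ f : Fin k → I.Dom, Function.Injective f ∧
          ∀ i, (u, f i) ∈ edgeRel I (if b then .inr R else .inl R) ∧ f i ∈ qsem I C }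

/-- `good I u w` : `w` is a valid non-backtracking walk starting at `u`. -/
def good {Cn Rn : Type} (I : Interp Cn Rn) : I.Dom → List ((Rn ⊕ Rn) × I.Dom) → Prop
  | _, [] => True
  | u, (e, v) :: rest =>
      (u, v) ∈ edgeRel I e ∧
      (match rest with
        | [] => True
        | (e', v') :: _ => ¬(e' = invE e ∧ v' = u)) ∧
      good I v rest

/-- The last element of a walk starting at `u`. -/
def lastOf {Cn Rn : Type} (I : Interp Cn Rn) : I.Dom → List ((Rn ⊕ Rn) × I.Dom) → I.Dom
  | u, [] => u
  | _, (_, v) :: rest => lastOf I v rest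

/-- The g-unraveling of `I` from `r`: the domain consists of all finite non-backtracking
walks from `r`; atomic concepts hold at a walk iff they hold at its last element; a role
`R` connects `s̄` to `s̄'` iff `s̄' = s̄ ++ [(R, u)]` or `s̄ = s̄' ++ [(R⁻, u)]` for some `u`. -/
def unravel {Cn Rn : Type} (I : Interp Cn Rn) (r : I.Dom) : Interp Cn Rn where
  Dom := { w : List ((Rn ⊕ Rn) × I.Dom) // good I r w }
  cInt A := { w | lastOf I r w.1 ∈ I.cInt A }
  rInt R := { p | (∃ u, p.2.1 = p.1.1 ++ [(Sum.inl R, u)]) ∨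
                  (∃ u, p.1.1 = p.2.1 ++ [(Sum.inr R, u)]) }

/-!
The last-element map `f` from the unraveling to `I` is a covering: it preserves atoms, and for
every edge label `e` it maps the `e`-neighbours of a walk `w` bijectively onto the
`e`-neighbours of `f w`. Those neighbours of `w` are its one-step extensions, plus its parent
when `w` ends with an `e⁻`-step; the image of the parent differs from the images of the
extensions because walks do not backtrack. Bijections preserve the number of successors, so
ALCQI concepts are invariant under coverings, by induction on the concept.
-/

open Set Function

lemma Set.BijOn.exists_injective_fin_iff {α β : Type*} {f : α → β} {s : Set α} {t : Set β}
    (h : BijOn f s t) (k : ℕ) :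
    (∃ g : Fin k → α, Injective g ∧ ∀ i, g i ∈ s) ↔
      ∃ g : Fin k → β, Injective g ∧ ∀ i, g i ∈ t := by
  constructor
  · rintro ⟨g, hg, hgs⟩
    exact ⟨f ∘ g, fun i j hij => hg (h.injOn (hgs i) (hgs j) hij), fun i => h.mapsTo (hgs i)⟩
  · rintro ⟨g, hg, hgt⟩
    choose a has hfa using fun i => h.surjOn (hgt i)
    exact ⟨a, fun i j hij => hg (by rw [← hfa i, ← hfa j, hij]), has⟩

section Covering

variable {Cn Rn : Type}

structure IsCovering (I J : Interp Cn Rn) (f : I.Dom → J.Dom) : Prop where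
  mem_cInt_iff : ∀ A x, f x ∈ J.cInt A ↔ x ∈ I.cInt A
  bijOn_edgeRel : ∀ e x,
    BijOn f {y | (x, y) ∈ edgeRel I e} {v | (f x, v) ∈ edgeRel J e}

lemma mem_qsem_atLeast_iff (I : Interp Cn Rn) (k : ℕ) (R : Rn) (b : Bool) (C : ALCQI Cn Rn)
    (x : I.Dom) :
    x ∈ qsem I (.atLeast k R b C) ↔ ∃ g : Fin k → I.Dom, Injective g ∧
      ∀ i, g i ∈ {y | (x, y) ∈ edgeRel I (if b then .inr R else .inl R)} ∩ qsem I C :=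
  Iff.rfl

theorem IsCovering.mem_qsem_iff {I J : Interp Cn Rn} {f : I.Dom → J.Dom}
    (hf : IsCovering I J f) (C : ALCQI Cn Rn) (x : I.Dom) :
    f x ∈ qsem J C ↔ x ∈ qsem I C := by
  induction C generalizing x with
  | top | bot => simp [qsem]
  | atom A => exact hf.mem_cInt_iff A x
  | neg C ih => simp only [qsem, mem_compl_iff, ih]
  | inter C D ihC ihD => simp only [qsem, mem_inter_iff, ihC, ihD]
  | atLeast k R b C ih =>
    have hpre : f ⁻¹' qsem J C = qsem I C := Set.ext ih
    have hbij := (hf.bijOn_edgeRel (if b then .inr R else .inl R) x).inter_mapsTo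
      (mapsTo_preimage f (qsem J C)) inter_subset_right
    rw [hpre] at hbij
    rw [mem_qsem_atLeast_iff, mem_qsem_atLeast_iff, hbij.exists_injective_fin_iff]

end Covering

section Walks

variable {Cn Rn : Type} (I : Interp Cn Rn)

lemma invE_invE (e : Rn ⊕ Rn) : invE (invE e) = e := by cases e <;> rfl

lemma edgeRel_invE (e : Rn ⊕ Rn) (a b : I.Dom) :
    (a, b) ∈ edgeRel I (invE e) ↔ (b, a) ∈ edgeRel I e := by
  cases e <;> exact Iff.rfl

lemma lastOf_append_singleton (e : Rn ⊕ Rn) (v : I.Dom) :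
    ∀ (u : I.Dom) (l : List ((Rn ⊕ Rn) × I.Dom)), lastOf I u (l ++ [(e, v)]) = v
  | _, [] => rfl
  | _, (_, v') :: l => lastOf_append_singleton e v v' l

lemma good_singleton (u : I.Dom) (e : Rn ⊕ Rn) (v : I.Dom) :
    good I u [(e, v)] ↔ (u, v) ∈ edgeRel I e := by
  simp [good]

lemma good_of_good_append (l₂ : List ((Rn ⊕ Rn) × I.Dom)) :
    ∀ (u : I.Dom) (l₁ : List ((Rn ⊕ Rn) × I.Dom)), good I u (l₁ ++ l₂) → good I u l₁
  | _, [], _ => trivial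
  | _, [_], h => ⟨h.1, trivial, trivial⟩
  | _, (_, v) :: p :: l₁, h => ⟨h.1, h.2.1, good_of_good_append l₂ v (p :: l₁) h.2.2⟩

lemma edgeRel_of_good_append_singleton (e : Rn ⊕ Rn) (v : I.Dom) :
    ∀ (u : I.Dom) (l : List ((Rn ⊕ Rn) × I.Dom)),
      good I u (l ++ [(e, v)]) → (lastOf I u l, v) ∈ edgeRel I e
  | _, [], h => h.1
  | _, (_, v') :: l, h => edgeRel_of_good_append_singleton e v v' l h.2.2

lemma good_append_pair_iff (e₀ e : Rn ⊕ Rn) (v₀ v : I.Dom) :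
    ∀ (u : I.Dom) (l : List ((Rn ⊕ Rn) × I.Dom)),
      good I u (l ++ [(e₀, v₀), (e, v)]) ↔
        good I u (l ++ [(e₀, v₀)]) ∧ (v₀, v) ∈ edgeRel I e ∧ ¬(e = invE e₀ ∧ v = lastOf I u l)
  | u, [] => by simp only [List.nil_append, good, lastOf]; tauto
  | u, (e₁, v₁) :: l => by
    simp only [List.cons_append, lastOf]
    rcases l with _ | ⟨⟨e₂, v₂⟩, l⟩
    · simp only [List.nil_append, good, lastOf]; tauto
    · change _ ∧ _ ∧ good I v₁ ((e₂, v₂) :: l ++ _) ↔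
        (_ ∧ _ ∧ good I v₁ ((e₂, v₂) :: l ++ _)) ∧ _
      rw [good_append_pair_iff e₀ e v₀ v v₁ ((e₂, v₂) :: l)]
      tauto

lemma ne_lastOf_of_good_append_backtrack (e : Rn ⊕ Rn) (u v₀ v : I.Dom)
    (l : List ((Rn ⊕ Rn) × I.Dom)) (h : good I u (l ++ [(invE e, v₀), (e, v)])) :
    v ≠ lastOf I u l := fun hv =>
  ((good_append_pair_iff I _ _ _ _ u l).1 h).2.2 ⟨(invE_invE e).symm, hv⟩

end Walks

section Unravel

variable {Cn Rn : Type} (I : Interp Cn Rn) (r : I.Dom)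

lemma edgeRel_unravel_iff (e : Rn ⊕ Rn) (w s : (unravel I r).Dom) :
    (w, s) ∈ edgeRel (unravel I r) e ↔
      (∃ u, s.1 = w.1 ++ [(e, u)]) ∨ ∃ u, w.1 = s.1 ++ [(invE e, u)] := by
  cases e with
  | inl R => exact Iff.rfl
  | inr R => exact Or.comm

lemma mapsTo_lastOf_edgeRel_unravel (e : Rn ⊕ Rn) (w : (unravel I r).Dom) :
    MapsTo (fun s => lastOf I r s.1) {s | (w, s) ∈ edgeRel (unravel I r) e}
      {v | (lastOf I r w.1, v) ∈ edgeRel I e} := by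
  intro s hs
  rcases (edgeRel_unravel_iff I r e w s).1 hs with ⟨u, hs⟩ | ⟨u, hw⟩
  · have hgood := s.2
    rw [hs] at hgood
    simpa only [mem_ofPred_eq, hs, lastOf_append_singleton] using
      edgeRel_of_good_append_singleton I e u r w.1 hgood
  · have hgood := w.2
    rw [hw] at hgood
    simpa only [mem_ofPred_eq, hw, lastOf_append_singleton, edgeRel_invE] using
      edgeRel_of_good_append_singleton I (invE e) u r s.1 hgood

lemma injOn_lastOf_edgeRel_unravel (e : Rn ⊕ Rn) (w : (unravel I r).Dom) :
    InjOn (fun s => lastOf I r s.1) {s | (w, s) ∈ edgeRel (unravel I r) e} := by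
  have child_ne_parent : ∀ s t : (unravel I r).Dom, (∃ u, s.1 = w.1 ++ [(e, u)]) →
      (∃ u, w.1 = t.1 ++ [(invE e, u)]) → lastOf I r s.1 ≠ lastOf I r t.1 := by
    rintro s t ⟨u, hs⟩ ⟨u₀, hw⟩
    have hgood := s.2
    rw [hs, hw, List.append_assoc] at hgood
    rw [hs, lastOf_append_singleton]
    exact ne_lastOf_of_good_append_backtrack I e r u₀ u t.1 hgood
  intro s hs s' hs' hl
  simp only at hl
  rcases (edgeRel_unravel_iff I r e w s).1 hs with hchild | ⟨u, hw⟩ <;>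
    rcases (edgeRel_unravel_iff I r e w s').1 hs' with hchild' | ⟨u', hw'⟩
  · obtain ⟨u, hs⟩ := hchild
    obtain ⟨u', hs'⟩ := hchild'
    rw [hs, hs', lastOf_append_singleton, lastOf_append_singleton] at hl
    exact Subtype.ext (by rw [hs, hs', hl])
  · exact absurd hl (child_ne_parent s s' hchild ⟨u', hw'⟩)
  · exact absurd hl.symm (child_ne_parent s' s hchild' ⟨u, hw⟩)
  · exact Subtype.ext (List.append_inj' (hw.symm.trans hw') rfl).1

lemma surjOn_lastOf_edgeRel_unravel (e : Rn ⊕ Rn) (w : (unravel I r).Dom) :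
    SurjOn (fun s => lastOf I r s.1) {s | (w, s) ∈ edgeRel (unravel I r) e}
      {v | (lastOf I r w.1, v) ∈ edgeRel I e} := by
  intro v hv
  suffices h : (∃ l u₀, w.1 = l ++ [(invE e, u₀)] ∧ lastOf I r l = v) ∨
      good I r (w.1 ++ [(e, v)]) by
    rcases h with ⟨l, u₀, hw, hl⟩ | hgood
    · exact ⟨⟨l, good_of_good_append I _ r l (hw ▸ w.2)⟩,
        (edgeRel_unravel_iff I r e w _).2 (Or.inr ⟨u₀, hw⟩), hl⟩
    · exact ⟨⟨_, hgood⟩, (edgeRel_unravel_iff I r e w _).2 (Or.inl ⟨v, rfl⟩),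
        lastOf_append_singleton I e v r w.1⟩
  rcases List.eq_nil_or_concat' w.1 with hw | ⟨l, ⟨e₀, u₀⟩, hw⟩
  · rw [hw] at hv ⊢
    exact Or.inr ((good_singleton I r e v).2 hv)
  · by_cases hback : e = invE e₀ ∧ v = lastOf I r l
    · refine Or.inl ⟨l, u₀, ?_, hback.2.symm⟩
      rw [hw, hback.1, invE_invE]
    · have hgood := w.2
      rw [hw] at hgood hv ⊢
      rw [List.append_assoc, List.singleton_append, good_append_pair_iff]
      rw [lastOf_append_singleton] at hv
      exact Or.inr ⟨hgood, hv, hback⟩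

theorem isCovering_lastOf_unravel :
    IsCovering (unravel I r) I (fun s => lastOf I r s.1) where
  mem_cInt_iff _ _ := Iff.rfl
  bijOn_edgeRel e w := ⟨mapsTo_lastOf_edgeRel_unravel I r e w,
    injOn_lastOf_edgeRel_unravel I r e w, surjOn_lastOf_edgeRel_unravel I r e w⟩

end Unravel

/-- Graded unraveling preserves ALCQI concepts: for every concept `C` and every walk `w`
in the g-unraveling `I*` of `I` from `r`, `w ∈ C^{I*}` iff `f(w) ∈ C^I`, where `f` is the
canonical map sending each walk to its last element. -/
theorem unravel_preserves_ALCQI {Cn Rn : Type} (I : Interp Cn Rn) (r : I.Dom)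
    (C : ALCQI Cn Rn) (w : (unravel I r).Dom) :
    w ∈ qsem (unravel I r) C ↔ lastOf I r w.1 ∈ qsem I C :=
  ((isCovering_lastOf_unravel I r).mem_qsem_iff C w).symm
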